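/- If all x_i are distinct and all y_j are distinct and x_i + y_j > 0 for all i,j, with x_1 < x_2 < ... < x_n and y_1 < y_2 < ... < y_n, then the Cauchy matrix C_{ij} = 1/(x_i + y_j) has positive determinant. -/

import Mathlib

/-!
Eliminating the last row and column of a Cauchy matrix leaves, as Schur complement, the Cauchy
matrix of the remaining points rescaled on the left by `(x n - x i) / (x i + y n)` and on the
right by `(y n - y j) / (x n + y j)`. For increasing `x`, `y` with positive denominators these
factors and the corner entry `1 / (x n + y n)` are positive, so positivity of the determinant
follows by induction on the size.
-/

open Matrix Fin

theorem Matrix.det_eq_mul_det_schur_last {K : Type*} [Field K] {n : ℕ}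
    (M : Matrix (Fin (n + 1)) (Fin (n + 1)) K) (h : M (last n) (last n) ≠ 0) :
    M.det = M (last n) (last n) * det (of fun i j : Fin n => M i.castSucc j.castSucc -
      M i.castSucc (last n) * M (last n) j.castSucc / M (last n) (last n)) := by
  set c := M (last n) (last n)
  let D : Matrix (Fin 1) (Fin 1) K := of fun _ _ => c
  let : Invertible D :=
    ⟨of fun _ _ => c⁻¹, by ext i j; obtain rfl := Subsingleton.elim i j; simp [D, mul_apply, h],
      by ext i j; obtain rfl := Subsingleton.elim i j; simp [D, mul_apply, h]⟩
  have hM : M = (fromBlocks (of fun i j : Fin n => M i.castSucc j.castSucc)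
      (of fun i _ => M i.castSucc (last n)) (of fun _ j => M (last n) j.castSucc) D).submatrix
      finSumFinEquiv.symm finSumFinEquiv.symm := by
    ext i j
    rcases i.eq_castSucc_or_eq_last with ⟨i, rfl⟩ | rfl <;>
      rcases j.eq_castSucc_or_eq_last with ⟨j, rfl⟩ | rfl <;> simp [D, c]
  conv_lhs => rw [hM, det_submatrix_equiv_self, det_fromBlocks₂₂]
  congr 2
  · simp [D]
  · have hinv : ⅟D = of fun _ _ => c⁻¹ := rfl
    ext i j
    simp only [hinv, D, sub_apply, of_apply, mul_apply, Finset.univ_unique, Finset.sum_singleton]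
    ring

def cauchyMatrix {K m n : Type*} [Field K] (x : m → K) (y : n → K) : Matrix m n K :=
  of fun i j => 1 / (x i + y j)

section CauchyMatrix

variable {K : Type*} [Field K] {n : ℕ}

theorem cauchyMatrix_schur_last (x y : Fin (n + 1) → K) (h : ∀ i j, x i + y j ≠ 0) :
    (of fun i j : Fin n => cauchyMatrix x y i.castSucc j.castSucc -
      cauchyMatrix x y i.castSucc (last n) * cauchyMatrix x y (last n) j.castSucc /
        cauchyMatrix x y (last n) (last n)) =
      diagonal (fun i => (x (last n) - x i.castSucc) / (x i.castSucc + y (last n))) *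
        cauchyMatrix (x ∘ castSucc) (y ∘ castSucc) *
        diagonal (fun j => (y (last n) - y j.castSucc) / (x (last n) + y j.castSucc)) := by
  ext i j
  have hij := h i.castSucc j.castSucc
  have hin := h i.castSucc (last n)
  have hnj := h (last n) j.castSucc
  have hnn := h (last n) (last n)
  simp only [cauchyMatrix, of_apply, mul_diagonal, diagonal_mul, Function.comp_apply]
  field_simp
  ring

theorem det_cauchyMatrix_succ (x y : Fin (n + 1) → K) (h : ∀ i j, x i + y j ≠ 0) :
    (cauchyMatrix x y).det =
      (∏ i : Fin n, (x (last n) - x i.castSucc) / (x i.castSucc + y (last n))) *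
        (cauchyMatrix (x ∘ castSucc) (y ∘ castSucc)).det *
        (∏ j : Fin n, (y (last n) - y j.castSucc) / (x (last n) + y j.castSucc)) /
        (x (last n) + y (last n)) := by
  have hcorner : cauchyMatrix x y (last n) (last n) ≠ 0 := one_div_ne_zero (h _ _)
  rw [det_eq_mul_det_schur_last _ hcorner, cauchyMatrix_schur_last x y h, det_mul, det_mul,
    det_diagonal, det_diagonal, cauchyMatrix, of_apply, one_div_mul_eq_div]

end CauchyMatrix

/-- If `x` and `y` are strictly increasing and `x i + y j > 0` for all `i, j`, then the
Cauchy matrix `C i j = 1 / (x i + y j)` has positive determinant. -/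
theorem cauchy_det_pos (n : ℕ) (x y : Fin n → ℝ)
    (hx : StrictMono x) (hy : StrictMono y) (h : ∀ i j, 0 < x i + y j) :
    0 < (Matrix.of fun i j : Fin n => 1 / (x i + y j)).det := by
  induction n with
  | zero => simp
  | succ n ih =>
    change 0 < (cauchyMatrix x y).det
    rw [det_cauchyMatrix_succ x y fun i j => (h i j).ne']
    have hdet := ih (x ∘ castSucc) (y ∘ castSucc) (hx.comp strictMono_castSucc)
      (hy.comp strictMono_castSucc) fun i j => h _ _
    have hrow : 0 < ∏ i : Fin n, (x (last n) - x i.castSucc) / (x i.castSucc + y (last n)) :=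
      Finset.prod_pos fun i _ => div_pos (sub_pos.2 (hx (castSucc_lt_last i))) (h _ _)
    have hcol : 0 < ∏ j : Fin n, (y (last n) - y j.castSucc) / (x (last n) + y j.castSucc) :=
      Finset.prod_pos fun j _ => div_pos (sub_pos.2 (hy (castSucc_lt_last j))) (h _ _)
    exact div_pos (mul_pos (mul_pos hrow hdet) hcol) (h _ _)
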